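/- arXiv:2207.03275 — 2 statements merged into one kernel-verified Lean document; each statement's English description precedes it below -/
import Mathlib

section
/- (Additivity of the reconfiguration function) For every shape S and all natural numbers l, k, l', k' it holds that F_{l',k'}(F_{l,k}(S)) = F_{l'+l, k'+k}(S). -/
/-- Minimum first coordinate of a shape (0 for the empty set). -/
def xmin (S : Finset (ℤ × ℤ)) : ℤ := ((S.image Prod.fst).min).untopD 0

/-- Minimum second coordinate of a shape (0 for the empty set). -/
def ymin (S : Finset (ℤ × ℤ)) : ℤ := ((S.image Prod.snd).min).untopD 0

/-- East full doubling. -/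
def DE (S : Finset (ℤ × ℤ)) : Finset (ℤ × ℤ) :=
  S.image (fun p => (2 * p.1 - xmin S, p.2)) ∪
    S.image (fun p => (2 * p.1 - xmin S + 1, p.2))

/-- North full doubling. -/
def DN (S : Finset (ℤ × ℤ)) : Finset (ℤ × ℤ) :=
  S.image (fun p => (p.1, 2 * p.2 - ymin S)) ∪
    S.image (fun p => (p.1, 2 * p.2 - ymin S + 1))

/-- Apply a sequence of full doubling operations (`true` = east, `false` = north),
in order (head of the list first). -/
def applySeq (σ : List Bool) (S : Finset (ℤ × ℤ)) : Finset (ℤ × ℤ) :=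
  σ.foldl (fun T b => if b then DE T else DN T) S

/-- The (p,q)-rectangle around an integer point. -/
noncomputable def Rec2 (u : ℤ × ℤ) (p q : ℕ) : Finset (ℤ × ℤ) :=
  Finset.Icc u.1 (u.1 + (p : ℤ) - 1) ×ˢ Finset.Icc u.2 (u.2 + (q : ℤ) - 1)

/-- The reconfiguration function `F_{l,k}`. -/
noncomputable def F (l k : ℕ) (S : Finset (ℤ × ℤ)) : Finset (ℤ × ℤ) :=
  S.biUnion fun p =>
    Rec2 (p.1 + ((2 : ℤ) ^ l - 1) * (p.1 - xmin S),
          p.2 + ((2 : ℤ) ^ k - 1) * (p.2 - ymin S)) (2 ^ l) (2 ^ k)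

/-- Two grid points are adjacent if they are at orthogonal distance 1. -/
def Adj (u v : ℤ × ℤ) : Prop := (u.1 - v.1).natAbs + (u.2 - v.2).natAbs = 1

/-- A shape is connected if any two of its points are joined by a path of
adjacent points inside the shape. -/
def ShapeConnected (S : Finset (ℤ × ℤ)) : Prop :=
  ∀ u ∈ S, ∀ v ∈ S,
    Relation.ReflTransGen (fun a b => a ∈ S ∧ b ∈ S ∧ Adj a b) u v

/-- `wD D x` is the number of elements of `D` strictly west of `x`. -/
def wD (D : Finset ℤ) (x : ℤ) : ℕ := (D.filter (· < x)).card

/-- East RC doubling of `S` with doubled column set `D`. -/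
def RCE (S : Finset (ℤ × ℤ)) (D : Finset ℤ) : Finset (ℤ × ℤ) :=
  S.image (fun p => (p.1 + (wD D p.1 : ℤ), p.2)) ∪
    (S.filter fun p => p.1 ∈ D).image fun p => (p.1 + (wD D p.1 : ℤ) + 1, p.2)

/-- North RC doubling of `S` with doubled row set `D`. -/
def RCN (S : Finset (ℤ × ℤ)) (D : Finset ℤ) : Finset (ℤ × ℤ) :=
  S.image (fun p => (p.1, p.2 + (wD D p.2 : ℤ))) ∪
    (S.filter fun p => p.2 ∈ D).image fun p => (p.1, p.2 + (wD D p.2 : ℤ) + 1)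

/-- `D` is an admissible doubled column set for `S`. -/
def eastAdmissible (S : Finset (ℤ × ℤ)) (D : Finset ℤ) : Prop :=
  D.Nonempty ∧ ∀ d ∈ D, ∃ y, (d, y) ∈ S

/-- `D` is an admissible doubled row set for `S`. -/
def northAdmissible (S : Finset (ℤ × ℤ)) (D : Finset ℤ) : Prop :=
  D.Nonempty ∧ ∀ d ∈ D, ∃ x, (x, d) ∈ S

/-- One east or north RC doubling step. -/
def RCStep (S T : Finset (ℤ × ℤ)) : Prop :=
  ∃ D : Finset ℤ,
    (eastAdmissible S D ∧ T = RCE S D) ∨ (northAdmissible S D ∧ T = RCN S D)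

/-- One single column or single row doubling step (an RC step with `|D| = 1`). -/
def SingleStep (S T : Finset (ℤ × ℤ)) : Prop :=
  ∃ D : Finset ℤ, D.card = 1 ∧
    ((eastAdmissible S D ∧ T = RCE S D) ∨ (northAdmissible S D ∧ T = RCN S D))

/-- Translate a shape by a vector. -/
def translateSh (v : ℤ × ℤ) (S : Finset (ℤ × ℤ)) : Finset (ℤ × ℤ) :=
  S.image fun p => (p.1 + v.1, p.2 + v.2)

/-- Single east column doubling at column `d`. -/
def oE (d : ℤ) (T : Finset (ℤ × ℤ)) : Finset (ℤ × ℤ) :=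
  (T.filter fun p => p.1 ≤ d) ∪ (T.filter fun p => d ≤ p.1).image fun p => (p.1 + 1, p.2)

/-- The column of `S` at `x`. -/
def colS (S : Finset (ℤ × ℤ)) (x : ℤ) : Finset ℤ := (S.filter fun p => p.1 = x).image Prod.snd

/-- The row of `S` at `y`. -/
def rowS (S : Finset (ℤ × ℤ)) (y : ℤ) : Finset ℤ := (S.filter fun p => p.2 = y).image Prod.fst

/-- `phiC S x` counts the column changes of `S` in the interval `(xmin S, x]`. -/
noncomputable def phiC (S : Finset (ℤ × ℤ)) (x : ℤ) : ℕ :=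
  ((Finset.Icc (xmin S + 1) x).filter fun x' => colS S x' ≠ colS S (x' - 1)).card

/-- `phiR S y` counts the row changes of `S` in the interval `(ymin S, y]`. -/
noncomputable def phiR (S : Finset (ℤ × ℤ)) (y : ℤ) : ℕ :=
  ((Finset.Icc (ymin S + 1) y).filter fun y' => rowS S y' ≠ rowS S (y' - 1)).card

/-- Column compression of a shape. -/
noncomputable def KC (S : Finset (ℤ × ℤ)) : Finset (ℤ × ℤ) := S.image fun p => ((phiC S p.1 : ℤ), p.2)

/-- Row compression of a shape. -/
noncomputable def KR (S : Finset (ℤ × ℤ)) : Finset (ℤ × ℤ) := S.image fun p => (p.1, (phiR S p.2 : ℤ))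

/-- The baseline shape of `S`. -/
noncomputable def Baseline (S : Finset (ℤ × ℤ)) : Finset (ℤ × ℤ) := KR (KC S)

/-- Number of distinct consecutive columns of `S`. -/
noncomputable def mC (S : Finset (ℤ × ℤ)) : ℕ := (S.image Prod.fst).sup (phiC S) + 1

/-- Number of distinct consecutive rows of `S`. -/
noncomputable def mR (S : Finset (ℤ × ℤ)) : ℕ := (S.image Prod.snd).sup (phiR S) + 1

/-- Consecutive multiplicity of the `i`-th distinct column of `S`. -/
noncomputable def MC (S : Finset (ℤ × ℤ)) (i : ℕ) : ℕ := ((S.image Prod.fst).filter fun x => phiC S x = i).card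

/-- Consecutive multiplicity of the `i`-th distinct row of `S`. -/
noncomputable def MR (S : Finset (ℤ × ℤ)) (i : ℕ) : ℕ := ((S.image Prod.snd).filter fun y => phiR S y = i).card

/-- The four unit directions. -/
def dirs : Finset (ℤ × ℤ) := {(1, 0), (-1, 0), (0, 1), (0, -1)}

/-- One node-addition growth step: a direction `d` is fixed and every new node is
generated at a position `p + d` for an existing node `p`. -/
def AddStep (S T : Finset (ℤ × ℤ)) : Prop :=
  ∃ d ∈ dirs, S ⊆ T ∧ T ⊆ S ∪ S.image (fun p => (p.1 + d.1, p.2 + d.2))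

/-! A point `(a, b)` lies in `F_{l,k}(S)` exactly when `S` contains the point obtained by
floor-dividing `a - xmin S` by `2 ^ l` and `b - ymin S` by `2 ^ k` (measured from the corner
`(xmin S, ymin S)`, which `F_{l,k}` keeps fixed). Additivity is then the identity
`⌊⌊t / 2 ^ l'⌋ / 2 ^ l⌋ = ⌊t / 2 ^ (l' + l)⌋`. -/

/-- Column `a` of `F_{l,k}(S)` is a copy of column `shrink (xmin S) l a` of `S`. -/
def shrink (m : ℤ) (l : ℕ) (a : ℤ) : ℤ := (a - m) / 2 ^ l + m

lemma shrink_eq_iff {m x a : ℤ} {l : ℕ} :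
    shrink m l a = x ↔
      x + (2 ^ l - 1) * (x - m) ≤ a ∧ a ≤ x + (2 ^ l - 1) * (x - m) + 2 ^ l - 1 := by
  have hpos : (0 : ℤ) < 2 ^ l := by positivity
  rw [shrink, ← eq_sub_iff_add_eq, le_antisymm_iff, Int.le_ediv_iff_mul_le hpos,
    ← Int.lt_add_one_iff, Int.ediv_lt_iff_lt_mul hpos]
  constructor <;> rintro ⟨h₁, h₂⟩ <;> constructor <;> linarith

lemma shrink_scale (m x : ℤ) (l : ℕ) : shrink m l (x + (2 ^ l - 1) * (x - m)) = x :=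
  shrink_eq_iff.2 ⟨le_rfl, by linarith [one_le_pow₀ (M₀ := ℤ) (n := l) one_le_two]⟩

lemma le_shrink_iff {m a : ℤ} {l : ℕ} : m ≤ shrink m l a ↔ m ≤ a := by
  rw [shrink, le_add_iff_nonneg_left, Int.ediv_nonneg_iff_of_pos (by positivity), sub_nonneg]

lemma shrink_shrink (m a : ℤ) (l l' : ℕ) : shrink m l (shrink m l' a) = shrink m (l' + l) a := by
  unfold shrink
  rw [add_sub_cancel_right, Int.ediv_ediv_of_nonneg (by positivity), ← pow_add]

lemma mem_F_iff {l k : ℕ} {S : Finset (ℤ × ℤ)} {q : ℤ × ℤ} :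
    q ∈ F l k S ↔ (shrink (xmin S) l q.1, shrink (ymin S) k q.2) ∈ S := by
  simp only [F, Rec2, Finset.mem_biUnion, Finset.mem_product, Finset.mem_Icc, Nat.cast_pow,
    Nat.cast_ofNat, ← shrink_eq_iff]
  exact ⟨fun ⟨p, hp, h₁, h₂⟩ => h₁ ▸ h₂ ▸ hp, fun h => ⟨_, h, rfl, rfl⟩⟩

lemma scale_mem_F {l k : ℕ} {S : Finset (ℤ × ℤ)} {p : ℤ × ℤ} (hp : p ∈ S) :
    (p.1 + (2 ^ l - 1) * (p.1 - xmin S), p.2 + (2 ^ k - 1) * (p.2 - ymin S)) ∈ F l k S := by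
  rwa [mem_F_iff, shrink_scale, shrink_scale]

lemma F_empty (l k : ℕ) : F l k ∅ = ∅ := Finset.biUnion_empty

lemma xmin_eq_min' {S : Finset (ℤ × ℤ)} (hS : S.Nonempty) :
    xmin S = (S.image Prod.fst).min' (hS.image _) := by
  rw [xmin, ← Finset.coe_min', WithTop.untopD_coe]

lemma ymin_eq_min' {S : Finset (ℤ × ℤ)} (hS : S.Nonempty) :
    ymin S = (S.image Prod.snd).min' (hS.image _) := by
  rw [ymin, ← Finset.coe_min', WithTop.untopD_coe]

lemma xmin_F (l k : ℕ) (S : Finset (ℤ × ℤ)) : xmin (F l k S) = xmin S := by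
  rcases S.eq_empty_or_nonempty with rfl | hS
  · rw [F_empty]
  obtain ⟨p, hp, hp₁⟩ := Finset.mem_image.1 (xmin_eq_min' hS ▸ Finset.min'_mem _ _)
  have hF : (F l k S).Nonempty := ⟨_, scale_mem_F (l := l) (k := k) hp⟩
  rw [xmin_eq_min' hF]
  refine le_antisymm ?_ ?_
  · refine Finset.min'_le _ _ (Finset.mem_image.2 ⟨_, scale_mem_F hp, ?_⟩)
    simp [hp₁]
  · refine Finset.le_min' _ _ _ fun a ha => ?_
    obtain ⟨q, hq, rfl⟩ := Finset.mem_image.1 ha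
    have hle := Finset.min'_le _ _ (Finset.mem_image_of_mem Prod.fst (mem_F_iff.1 hq))
    rw [← xmin_eq_min' hS] at hle
    exact le_shrink_iff.1 hle

lemma ymin_F (l k : ℕ) (S : Finset (ℤ × ℤ)) : ymin (F l k S) = ymin S := by
  rcases S.eq_empty_or_nonempty with rfl | hS
  · rw [F_empty]
  obtain ⟨p, hp, hp₂⟩ := Finset.mem_image.1 (ymin_eq_min' hS ▸ Finset.min'_mem _ _)
  have hF : (F l k S).Nonempty := ⟨_, scale_mem_F (l := l) (k := k) hp⟩
  rw [ymin_eq_min' hF]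
  refine le_antisymm ?_ ?_
  · refine Finset.min'_le _ _ (Finset.mem_image.2 ⟨_, scale_mem_F hp, ?_⟩)
    simp [hp₂]
  · refine Finset.le_min' _ _ _ fun a ha => ?_
    obtain ⟨q, hq, rfl⟩ := Finset.mem_image.1 ha
    have hle := Finset.min'_le _ _ (Finset.mem_image_of_mem Prod.snd (mem_F_iff.1 hq))
    rw [← ymin_eq_min' hS] at hle
    exact le_shrink_iff.1 hle

theorem reconfiguration_additive_general (S : Finset (ℤ × ℤ))
    (l k l' k' : ℕ) :
    F l' k' (F l k S) = F (l' + l) (k' + k) S := by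
  ext q
  simp only [mem_F_iff, xmin_F, ymin_F, shrink_shrink]

/-- additivity of the reconfiguration function. -/
theorem reconfiguration_additive (S : Finset (ℤ × ℤ)) (hS : S.Nonempty)
    (l k l' k' : ℕ) :
    F l' k' (F l k S) = F (l' + l) (k' + k) S :=
  reconfiguration_additive_general S l k l' k'
end

section
/- Let S be a shape and let D = {d_1 < d_2 < … < d_m} be a nonempty finite set of first coordinates of points of S. For an integer d, let o_d denote the single east column doubling o_d(T) := {(x,y) ∈ T : x ≤ d} ∪ {(x+1, y) : (x,y) ∈ T, x ≥ d}. Then the parallel RC doubling decomposes into single doublings applied in west-to-east order at shifted coordinates: RC_E(S, D) = o_{d_m + (m−1)}( … (o_{d_2 + 1}(o_{d_1}(S))) … ), where the i-th single doubling is applied at coordinate d_i + (i − 1). -/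
/-! Both sides act column by column: `(u, v)` lies in `RCE S D` iff `(x, v) ∈ S` for a column `x`
that the doubling copies to `u`, and `oE c` pulls back along the map collapsing column `c + 1`
onto `c`. Adding the easternmost element `d` to `D` therefore amounts to one further single
doubling, at the column `d + #D` where `d` has landed, which is the inductive step. -/

open scoped List in
theorem Finset.sort_insert_of_forall_lt {α : Type*} [LinearOrder α] (s : Finset α) {a : α}
    (ha : ∀ b ∈ s, b < a) : (insert a s).sort (· ≤ ·) = s.sort (· ≤ ·) ++ [a] := by
  have ha' : a ∉ s := fun h => lt_irrefl a (ha a h)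
  refine List.Perm.eq_of_pairwise' ((insert a s).pairwise_sort _) ?_ ?_
  · rw [List.pairwise_append]
    refine ⟨s.pairwise_sort _, List.pairwise_singleton _ _, fun b hb c hc => ?_⟩
    rw [List.mem_singleton.mp hc]
    exact (ha b ((Finset.mem_sort _).mp hb)).le
  · calc (insert a s).sort (· ≤ ·) ~ (insert a s).toList := Finset.sort_perm_toList _ _
      _ ~ a :: s.toList := Finset.toList_insert ha'
      _ ~ a :: s.sort (· ≤ ·) := ((Finset.sort_perm_toList _ _).cons a).symm
      _ ~ s.sort (· ≤ ·) ++ [a] := (List.perm_append_singleton _ _).symm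

theorem wD_le_card (D : Finset ℤ) (x : ℤ) : wD D x ≤ D.card := Finset.card_filter_le _ _

theorem wD_lt_card_of_mem {D : Finset ℤ} {x : ℤ} (hx : x ∈ D) : wD D x < D.card :=
  Finset.card_lt_card (Finset.filter_ssubset.mpr ⟨x, hx, lt_irrefl x⟩)

theorem wD_eq_card {D : Finset ℤ} {x : ℤ} (h : ∀ b ∈ D, b < x) : wD D x = D.card := by
  rw [wD, Finset.filter_true_of_mem h]

theorem wD_insert_of_le {D : Finset ℤ} {d x : ℤ} (hx : x ≤ d) :
    wD (insert d D) x = wD D x := by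
  rw [wD, Finset.filter_insert, if_neg hx.not_gt, wD]

/-- Column `u` of `RCE S D` is a copy of column `x` of `S`. -/
def IsColumnCopy (D : Finset ℤ) (x u : ℤ) : Prop :=
  u = x + wD D x ∨ (x ∈ D ∧ u = x + wD D x + 1)

theorem mem_RCE {S : Finset (ℤ × ℤ)} {D : Finset ℤ} {u v : ℤ} :
    (u, v) ∈ RCE S D ↔ ∃ x, (x, v) ∈ S ∧ IsColumnCopy D x u := by
  simp only [RCE, IsColumnCopy, Finset.mem_union, Finset.mem_image, Finset.mem_filter,
    Prod.ext_iff, Prod.exists]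
  grind

theorem mem_oE {T : Finset (ℤ × ℤ)} {c u v : ℤ} :
    (u, v) ∈ oE c T ↔ (if u ≤ c then u else u - 1, v) ∈ T := by
  simp only [oE, Finset.mem_union, Finset.mem_filter, Finset.mem_image, Prod.ext_iff,
    Prod.exists]
  split_ifs <;> grind

theorem isColumnCopy_insert_of_forall_lt {D : Finset ℤ} {d : ℤ} (hd : ∀ b ∈ D, b < d)
    (x u : ℤ) :
    IsColumnCopy (insert d D) x u ↔
      IsColumnCopy D x (if u ≤ d + D.card then u else u - 1) := by
  unfold IsColumnCopy
  rcases lt_trichotomy x d with hx | rfl | hx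
  · have := wD_le_card D x
    rw [wD_insert_of_le hx.le, Finset.mem_insert, or_iff_right hx.ne]
    by_cases hxD : x ∈ D
    · have := wD_lt_card_of_mem hxD
      simp only [hxD, true_and]
      split_ifs <;> omega
    · simp only [hxD, false_and, or_false]
      split_ifs <;> omega
  · have hxD : x ∉ D := fun h => lt_irrefl x (hd x h)
    rw [wD_insert_of_le le_rfl, wD_eq_card hd]
    simp only [Finset.mem_insert_self, hxD, true_and, false_and, or_false]
    split_ifs <;> omega
  · have hxD : x ∉ D := fun h => (hd x h).not_gt hx
    have hw' : wD (insert d D) x = D.card + 1 := by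
      rw [wD_eq_card, Finset.card_insert_of_notMem fun h => lt_irrefl d (hd d h)]
      simpa using ⟨hx, fun b hb => (hd b hb).trans hx⟩
    rw [hw', wD_eq_card fun b hb => (hd b hb).trans hx, Finset.mem_insert, or_iff_right hx.ne']
    simp only [hxD, false_and, or_false]
    split_ifs <;> omega

theorem RCE_empty (S : Finset (ℤ × ℤ)) : RCE S ∅ = S := by
  simp [RCE, wD]

theorem RCE_insert_of_forall_lt (S : Finset (ℤ × ℤ)) {D : Finset ℤ} {d : ℤ}
    (hd : ∀ b ∈ D, b < d) : RCE S (insert d D) = oE (d + D.card) (RCE S D) := by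
  ext ⟨u, v⟩
  rw [mem_oE, mem_RCE, mem_RCE]
  exact exists_congr fun x => and_congr_right' (isColumnCopy_insert_of_forall_lt hd x u)

theorem RC_doubling_decomposes_general (S : Finset (ℤ × ℤ)) (D : Finset ℤ) :
    RCE S D =
      (D.sort (· ≤ ·)).zipIdx.foldl (fun T di => oE (di.1 + (di.2 : ℤ)) T) S := by
  induction D using Finset.induction_on_max with
  | empty => simp [RCE_empty]
  | insert d D hd ih =>
    rw [RCE_insert_of_forall_lt S hd, Finset.sort_insert_of_forall_lt D hd, List.zipIdx_append,
      List.foldl_append, ← ih]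
    simp [Finset.length_sort]

/-- a parallel east RC doubling decomposes into single east column
doublings applied in west-to-east order at shifted coordinates: the `i`-th (0-based)
single doubling is applied at coordinate `d_i + i`. -/
theorem RC_doubling_decomposes (S : Finset (ℤ × ℤ)) (hS : S.Nonempty)
    (D : Finset ℤ) (hD : D.Nonempty) (hadm : ∀ d ∈ D, ∃ y, (d, y) ∈ S) :
    RCE S D =
      (D.sort (· ≤ ·)).zipIdx.foldl (fun T di => oE (di.1 + (di.2 : ℤ)) T) S :=
  RC_doubling_decomposes_general S D
end
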